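/- (Small data coercivity, case κ < 1 with K₁ < K₃.) Let Ω ⊆ ℝ³ be open and bounded, let 0 < K₁ < K₃, and suppose C > 0 is such that every smooth compactly supported vector field v with support in Ω satisfies ∫_Ω |v|² ≤ C(∫_Ω (∇·v)² + ∫_Ω |∇×v|²). Let n_k : ℝ³ → ℝ³ be continuously differentiable with |n_k(x)|² ≤ β (β ≥ 1) and |∇×n_k(x)|² ≤ C_sup for all x ∈ Ω with C_sup > 0, and let λ_k : Ω → ℝ be measurable with λ_k ≥ 0 a.e. on Ω. Set α₁ = K₁/(C+1) and α₄ = K₃(4√(β C_sup) + C_sup). If K₂ = (1−ε₂)K₃ with 0 < ε₂ < min(α₁/α₄, (K₃−K₁)/(β K₃), 1/β), then for every smooth compactly supported v with support in Ω, a(v, v) ≥ (α₁ − ε₂α₄) ‖v‖_DC², and α₁ − ε₂α₄ > 0. -/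

import Mathlib

open MeasureTheory Matrix

/-- The matrix `Z(n) = I - (1-κ) n nᵀ`. -/
noncomputable def Zmat (κ : ℝ) (n : Fin 3 → ℝ) : Matrix (Fin 3) (Fin 3) ℝ :=
  1 - (1 - κ) • Matrix.vecMulVec n n

/-- Partial derivative of a scalar field on `ℝ³` in the `i`-th coordinate direction. -/
noncomputable def pd (f : (Fin 3 → ℝ) → ℝ) (i : Fin 3) (x : Fin 3 → ℝ) : ℝ :=
  fderiv ℝ f x (Pi.single i 1)

/-- Divergence of a vector field on `ℝ³`. -/
noncomputable def vdiv (v : (Fin 3 → ℝ) → (Fin 3 → ℝ)) (x : Fin 3 → ℝ) : ℝ :=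
  ∑ i, pd (fun y => v y i) i x

/-- Curl of a vector field on `ℝ³`. -/
noncomputable def vcurl (v : (Fin 3 → ℝ) → (Fin 3 → ℝ)) (x : Fin 3 → ℝ) : Fin 3 → ℝ :=
  ![pd (fun y => v y 2) 1 x - pd (fun y => v y 1) 2 x,
    pd (fun y => v y 0) 2 x - pd (fun y => v y 2) 0 x,
    pd (fun y => v y 1) 0 x - pd (fun y => v y 0) 1 x]

/-- Squared `H(div) ∩ H(curl)` norm over `Ω`:
`‖v‖_DC² = ∫_Ω |v|² + ∫_Ω (∇·v)² + ∫_Ω |∇×v|²`. -/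
noncomputable def DCsq (Ω : Set (Fin 3 → ℝ)) (v : (Fin 3 → ℝ) → (Fin 3 → ℝ)) : ℝ :=
  (∫ x in Ω, v x ⬝ᵥ v x) + (∫ x in Ω, (vdiv v x) ^ 2) +
    (∫ x in Ω, vcurl v x ⬝ᵥ vcurl v x)

/-- The linearized bilinear form `a(u,v)` of the Newton iteration, with `κ = K₂/K₃`. -/
noncomputable def aform (Ω : Set (Fin 3 → ℝ)) (K₁ K₂ K₃ : ℝ)
    (nk : (Fin 3 → ℝ) → (Fin 3 → ℝ)) (lam : (Fin 3 → ℝ) → ℝ)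
    (u v : (Fin 3 → ℝ) → (Fin 3 → ℝ)) : ℝ :=
  K₁ * (∫ x in Ω, vdiv u x * vdiv v x)
    + K₃ * (∫ x in Ω, ((Zmat (K₂ / K₃) (nk x)) *ᵥ vcurl u x) ⬝ᵥ vcurl v x)
    + (K₂ - K₃) *
        ((∫ x in Ω, (u x ⬝ᵥ vcurl v x) * (nk x ⬝ᵥ vcurl nk x))
          + (∫ x in Ω, (nk x ⬝ᵥ vcurl v x) * (u x ⬝ᵥ vcurl nk x))
          + (∫ x in Ω, (nk x ⬝ᵥ vcurl nk x) * (v x ⬝ᵥ vcurl u x))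
          + (∫ x in Ω, (nk x ⬝ᵥ vcurl u x) * (v x ⬝ᵥ vcurl nk x))
          + (∫ x in Ω, (u x ⬝ᵥ vcurl nk x) * (v x ⬝ᵥ vcurl nk x)))
    + ∫ x in Ω, lam x * (u x ⬝ᵥ v x)

lemma dot_self_nn (a : Fin 3 → ℝ) : 0 ≤ a ⬝ᵥ a := by
  simp only [dotProduct, Fin.sum_univ_three]
  nlinarith [mul_self_nonneg (a 0), mul_self_nonneg (a 1), mul_self_nonneg (a 2)]

lemma cs3 (a b : Fin 3 → ℝ) : (a ⬝ᵥ b)^2 ≤ (a ⬝ᵥ a) * (b ⬝ᵥ b) := by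
  simp only [dotProduct, Fin.sum_univ_three]
  nlinarith [sq_nonneg (a 0 * b 1 - a 1 * b 0), sq_nonneg (a 0 * b 2 - a 2 * b 0),
    sq_nonneg (a 1 * b 2 - a 2 * b 1)]

lemma zquad (κ : ℝ) (n w : Fin 3 → ℝ) :
    (Zmat κ n *ᵥ w) ⬝ᵥ w = w ⬝ᵥ w - (1-κ) * (n ⬝ᵥ w)^2 := by
  simp [Zmat, Matrix.mulVec, Matrix.vecMulVec_apply, dotProduct, Matrix.sub_apply,
    Matrix.one_apply, Fin.sum_univ_three, Matrix.smul_apply]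
  ring

lemma cont_pd {f : (Fin 3 → ℝ) → ℝ} (hf : ContDiff ℝ 1 f) (i : Fin 3) :
    Continuous (pd f i) :=
  (hf.continuous_fderiv one_ne_zero).clm_apply continuous_const

lemma pd_zero {f : (Fin 3 → ℝ) → ℝ} (i : Fin 3) {x : Fin 3 → ℝ}
    (hx : x ∉ tsupport f) : pd f i x = 0 := by
  have h : f =ᶠ[nhds x] (fun _ => 0) := by
    filter_upwards [(isClosed_tsupport f).isOpen_compl.mem_nhds hx] with y hy
    exact image_eq_zero_of_notMem_tsupport hy
  rw [pd, h.fderiv_eq]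
  simp

lemma tsupp_comp (v : (Fin 3 → ℝ) → (Fin 3 → ℝ)) (i : Fin 3) :
    tsupport (fun y => v y i) ⊆ tsupport v := by
  apply closure_mono
  intro y hy
  simp only [Function.mem_support] at hy ⊢
  intro h; exact hy (by rw [h]; rfl)

lemma curl_cont {v : (Fin 3 → ℝ) → (Fin 3 → ℝ)} (hv : ContDiff ℝ 1 v) :
    Continuous (vcurl v) := by
  refine continuous_pi fun i => ?_
  fin_cases i <;>
    simp only [vcurl, Matrix.cons_val_zero, Matrix.cons_val_one, Matrix.head_cons,
      Matrix.cons_val_two, Matrix.tail_cons] <;>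
    exact (cont_pd ((contDiff_pi.mp hv) _) _).sub (cont_pd ((contDiff_pi.mp hv) _) _)

lemma curl_zero {v : (Fin 3 → ℝ) → (Fin 3 → ℝ)} {x : Fin 3 → ℝ}
    (hx : x ∉ tsupport v) : vcurl v x = 0 := by
  have h : ∀ i j, pd (fun y => v y i) j x = 0 :=
    fun i j => pd_zero j (fun h => hx (tsupp_comp v i h))
  funext k
  fin_cases k <;> simp [vcurl, h]

lemma div_cont {v : (Fin 3 → ℝ) → (Fin 3 → ℝ)} (hv : ContDiff ℝ 1 v) :
    Continuous (vdiv v) := by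
  unfold vdiv
  exact continuous_finset_sum _ fun i _ => cont_pd ((contDiff_pi.mp hv) i) i

lemma vdiv_zero {v : (Fin 3 → ℝ) → (Fin 3 → ℝ)} {x : Fin 3 → ℝ}
    (hx : x ∉ tsupport v) : vdiv v x = 0 := by
  unfold vdiv
  refine Finset.sum_eq_zero fun i _ => pd_zero i (fun h => hx (tsupp_comp v i h))

lemma cont_dot {X : Type*} [TopologicalSpace X] {f g : X → Fin 3 → ℝ}
    (hf : Continuous f) (hg : Continuous g) : Continuous fun x => f x ⬝ᵥ g x := by
  simp only [dotProduct]
  exact continuous_finset_sum _ fun i _ =>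
    ((continuous_apply i).comp hf).mul ((continuous_apply i).comp hg)

lemma le_of_sq_le_sq'' (t b : ℝ) (hb : 0 ≤ b) (h : t^2 ≤ b^2) : t ≤ b := by
  nlinarith [sq_nonneg (t - b), sq_nonneg (t + b)]

lemma ptbound (β Csup s : ℝ) (hβ : 0 < β) (hs : 0 ≤ s)
    (hs2 : s^2 = β*Csup) (n b u w : Fin 3 → ℝ) (hn : n ⬝ᵥ n ≤ β) (hb : b ⬝ᵥ b ≤ Csup) :
    (n ⬝ᵥ w)^2 + 2*((u ⬝ᵥ w)*(n ⬝ᵥ b)) + 2*((n ⬝ᵥ w)*(u ⬝ᵥ b)) + (u ⬝ᵥ b)*(u ⬝ᵥ b)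
      ≤ β*(w ⬝ᵥ w) + 2*s*((u ⬝ᵥ u)+(w ⬝ᵥ w)) + Csup*(u ⬝ᵥ u) := by
  have hp := dot_self_nn u
  have hq := dot_self_nn w
  have hnn := dot_self_nn n
  have hbb := dot_self_nn b
  have h1 : (n ⬝ᵥ w)^2 ≤ β*(w ⬝ᵥ w) :=
    le_trans (cs3 n w) (by nlinarith)
  have h5 : (u ⬝ᵥ b)^2 ≤ Csup*(u ⬝ᵥ u) :=
    le_trans (cs3 u b) (by nlinarith)
  have huw : (u ⬝ᵥ w)^2 ≤ (u ⬝ᵥ u)*(w ⬝ᵥ w) := cs3 u w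
  have hnb : (n ⬝ᵥ b)^2 ≤ β*Csup :=
    le_trans (cs3 n b) (by nlinarith)
  have hpq : 0 ≤ (u ⬝ᵥ u) + (w ⬝ᵥ w) := by linarith
  have t1 : 2*((u ⬝ᵥ w)*(n ⬝ᵥ b)) ≤ s*((u ⬝ᵥ u)+(w ⬝ᵥ w)) := by
    apply le_of_sq_le_sq'' _ _ (mul_nonneg hs hpq)
    have a1 : (u ⬝ᵥ w)^2*(n ⬝ᵥ b)^2 ≤ ((u ⬝ᵥ u)*(w ⬝ᵥ w))*(β*Csup) :=
      mul_le_mul huw hnb (sq_nonneg _) (by nlinarith)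
    nlinarith [mul_nonneg (mul_nonneg hs hs) (sq_nonneg ((u ⬝ᵥ u) - (w ⬝ᵥ w)))]
  have t2 : 2*((n ⬝ᵥ w)*(u ⬝ᵥ b)) ≤ s*((u ⬝ᵥ u)+(w ⬝ᵥ w)) := by
    apply le_of_sq_le_sq'' _ _ (mul_nonneg hs hpq)
    have a1 : (n ⬝ᵥ w)^2*(u ⬝ᵥ b)^2 ≤ (β*(w ⬝ᵥ w))*(Csup*(u ⬝ᵥ u)) :=
      mul_le_mul h1 h5 (sq_nonneg _) (by nlinarith)
    nlinarith [mul_nonneg (mul_nonneg hs hs) (sq_nonneg ((u ⬝ᵥ u) - (w ⬝ᵥ w)))]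
  nlinarith [t1, t2, h1, h5]

set_option maxHeartbeats 1000000 in
/-- small data coercivity, `κ < 1`, `K₁ < K₃`: if `K₂ = (1−ε₂)K₃` with
`0 < ε₂ < min(α₁/α₄, (K₃−K₁)/(βK₃), 1/β)`, where `α₁ = K₁/(C+1)` and
`α₄ = K₃(4√(βC_sup)+C_sup)`, then `a(v,v) ≥ (α₁ − ε₂α₄)‖v‖_DC²` with `α₁ − ε₂α₄ > 0`. -/
theorem stmt16 (Ω : Set (Fin 3 → ℝ)) (hΩo : IsOpen Ω) (hΩb : Bornology.IsBounded Ω)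
    (K₁ K₃ C : ℝ) (hK₁ : 0 < K₁) (hK₁₃ : K₁ < K₃) (hC : 0 < C)
    (hPoincare : ∀ v : (Fin 3 → ℝ) → (Fin 3 → ℝ),
      ContDiff ℝ (⊤ : ℕ∞) v → HasCompactSupport v → tsupport v ⊆ Ω →
      (∫ x in Ω, v x ⬝ᵥ v x) ≤
        C * ((∫ x in Ω, (vdiv v x) ^ 2) + (∫ x in Ω, vcurl v x ⬝ᵥ vcurl v x)))
    (β Csup : ℝ) (hβ : 1 ≤ β) (hCsup : 0 < Csup)
    (nk : (Fin 3 → ℝ) → (Fin 3 → ℝ)) (hnk : ContDiff ℝ 1 nk)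
    (hnβ : ∀ x ∈ Ω, nk x ⬝ᵥ nk x ≤ β)
    (hncurl : ∀ x ∈ Ω, vcurl nk x ⬝ᵥ vcurl nk x ≤ Csup)
    (lam : (Fin 3 → ℝ) → ℝ) (hlam_meas : Measurable lam)
    (hlam : ∀ᵐ x ∂(volume.restrict Ω), 0 ≤ lam x)
    (ε₂ K₂ : ℝ) (hε₂ : 0 < ε₂)
    (hε₂' : ε₂ < min ((K₁ / (C + 1)) / (K₃ * (4 * Real.sqrt (β * Csup) + Csup)))
        (min ((K₃ - K₁) / (β * K₃)) (1 / β)))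
    (hK₂ : K₂ = (1 - ε₂) * K₃) :
    0 < K₁ / (C + 1) - ε₂ * (K₃ * (4 * Real.sqrt (β * Csup) + Csup)) ∧
    ∀ v : (Fin 3 → ℝ) → (Fin 3 → ℝ),
      ContDiff ℝ (⊤ : ℕ∞) v → HasCompactSupport v → tsupport v ⊆ Ω →
      (K₁ / (C + 1) - ε₂ * (K₃ * (4 * Real.sqrt (β * Csup) + Csup))) * DCsq Ω v ≤
        aform Ω K₁ K₂ K₃ nk lam v v := by
  have hK₃ : 0 < K₃ := hK₁.trans hK₁₃
  have hβ0 : 0 < β := lt_of_lt_of_le one_pos hβ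
  set s : ℝ := Real.sqrt (β * Csup) with hsdef
  have hs0 : 0 ≤ s := Real.sqrt_nonneg _
  have hs2 : s^2 = β * Csup := Real.sq_sqrt (by positivity)
  have hα₄ : 0 < K₃ * (4 * s + Csup) := by positivity
  rw [lt_min_iff, lt_min_iff] at hε₂'
  obtain ⟨hεa, hεb, -⟩ := hε₂'
  have hεa' : ε₂ * (K₃ * (4 * s + Csup)) < K₁ / (C + 1) := (lt_div_iff₀ hα₄).mp hεa
  have hεb' : ε₂ * (β * K₃) ≤ K₃ - K₁ :=
    le_of_lt ((lt_div_iff₀ (by positivity)).mp hεb)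
  refine ⟨by linarith, ?_⟩
  intro v hv hvs hvΩ
  have hκ : K₂ / K₃ = 1 - ε₂ := by
    rw [hK₂]; field_simp
  -- continuity and support facts
  have hv1 : ContDiff ℝ 1 v := hv.of_le (by simp)
  have vC : Continuous v := hv1.continuous
  have cvC : Continuous (vcurl v) := curl_cont hv1
  have dvC : Continuous (vdiv v) := div_cont hv1
  have nC : Continuous nk := hnk.continuous
  have cnC : Continuous (vcurl nk) := curl_cont hnk
  have hv0 : ∀ x, x ∉ tsupport v → v x = 0 := fun x hx => image_eq_zero_of_notMem_tsupport hx
  have hcv0 : ∀ x, x ∉ tsupport v → vcurl v x = 0 := fun x hx => curl_zero hx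
  have hdv0 : ∀ x, x ∉ tsupport v → vdiv v x = 0 := fun x hx => vdiv_zero hx
  have key : ∀ f : (Fin 3 → ℝ) → ℝ, Continuous f → (∀ x, x ∉ tsupport v → f x = 0) →
      IntegrableOn f Ω volume := fun f hf h0 =>
    (hf.integrable_of_hasCompactSupport (HasCompactSupport.intro hvs h0)).integrableOn
  have iV : IntegrableOn (fun x => v x ⬝ᵥ v x) Ω volume :=
    key _ (cont_dot vC vC) (fun x hx => by simp [hv0 x hx])
  have iD : IntegrableOn (fun x => (vdiv v x)^2) Ω volume :=
    key _ (dvC.pow 2) (fun x hx => by simp [hdv0 x hx])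
  have iCu : IntegrableOn (fun x => vcurl v x ⬝ᵥ vcurl v x) Ω volume :=
    key _ (cont_dot cvC cvC) (fun x hx => by simp [hcv0 x hx])
  have iNw : IntegrableOn (fun x => (nk x ⬝ᵥ vcurl v x)^2) Ω volume :=
    key _ ((cont_dot nC cvC).pow 2) (fun x hx => by simp [hcv0 x hx])
  have iS1 : IntegrableOn (fun x => (v x ⬝ᵥ vcurl v x) * (nk x ⬝ᵥ vcurl nk x)) Ω volume :=
    key _ ((cont_dot vC cvC).mul (cont_dot nC cnC)) (fun x hx => by simp [hv0 x hx])
  have iS2 : IntegrableOn (fun x => (nk x ⬝ᵥ vcurl v x) * (v x ⬝ᵥ vcurl nk x)) Ω volume :=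
    key _ ((cont_dot nC cvC).mul (cont_dot vC cnC)) (fun x hx => by simp [hcv0 x hx])
  have iS5 : IntegrableOn (fun x => (v x ⬝ᵥ vcurl nk x) * (v x ⬝ᵥ vcurl nk x)) Ω volume :=
    key _ ((cont_dot vC cnC).mul (cont_dot vC cnC)) (fun x hx => by simp [hv0 x hx])
  -- nonnegativity
  have hVnn : 0 ≤ ∫ x in Ω, v x ⬝ᵥ v x := integral_nonneg fun x => dot_self_nn _
  have hDnn : 0 ≤ ∫ x in Ω, (vdiv v x)^2 := integral_nonneg fun x => sq_nonneg _
  have hCunn : 0 ≤ ∫ x in Ω, vcurl v x ⬝ᵥ vcurl v x := integral_nonneg fun x => dot_self_nn _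
  have hL : 0 ≤ ∫ x in Ω, lam x * (v x ⬝ᵥ v x) := by
    refine integral_nonneg_of_ae ?_
    filter_upwards [hlam] with x hx
    exact mul_nonneg hx (dot_self_nn _)
  have hP := hPoincare v hv hvs hvΩ
  -- typed integrable sums
  have i1 : IntegrableOn (fun x => (nk x ⬝ᵥ vcurl v x)^2
      + 2*((v x ⬝ᵥ vcurl v x) * (nk x ⬝ᵥ vcurl nk x))) Ω volume :=
    iNw.add (iS1.const_mul 2)
  have i2 : IntegrableOn (fun x => (nk x ⬝ᵥ vcurl v x)^2
      + 2*((v x ⬝ᵥ vcurl v x) * (nk x ⬝ᵥ vcurl nk x))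
      + 2*((nk x ⬝ᵥ vcurl v x) * (v x ⬝ᵥ vcurl nk x))) Ω volume :=
    i1.add (iS2.const_mul 2)
  have j1 : IntegrableOn (fun x => β*(vcurl v x ⬝ᵥ vcurl v x)
      + 2*s*((v x ⬝ᵥ v x) + (vcurl v x ⬝ᵥ vcurl v x))) Ω volume :=
    (iCu.const_mul β).add ((iV.add iCu).const_mul (2*s))
  -- the combined inequality
  have hmono : (∫ x in Ω, ((nk x ⬝ᵥ vcurl v x)^2
        + 2*((v x ⬝ᵥ vcurl v x) * (nk x ⬝ᵥ vcurl nk x))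
        + 2*((nk x ⬝ᵥ vcurl v x) * (v x ⬝ᵥ vcurl nk x))
        + (v x ⬝ᵥ vcurl nk x) * (v x ⬝ᵥ vcurl nk x)))
      ≤ ∫ x in Ω, (β*(vcurl v x ⬝ᵥ vcurl v x)
        + 2*s*((v x ⬝ᵥ v x) + (vcurl v x ⬝ᵥ vcurl v x))
        + Csup*(v x ⬝ᵥ v x)) := by
    refine setIntegral_mono_on (i2.add iS5) (j1.add (iV.const_mul Csup))
      hΩo.measurableSet ?_
    intro x hx
    exact ptbound β Csup s hβ0 hs0 hs2 (nk x) (vcurl nk x) (v x) (vcurl v x)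
      (hnβ x hx) (hncurl x hx)
  have a1 : (∫ x in Ω, ((nk x ⬝ᵥ vcurl v x)^2
        + 2*((v x ⬝ᵥ vcurl v x) * (nk x ⬝ᵥ vcurl nk x))))
      = (∫ x in Ω, (nk x ⬝ᵥ vcurl v x)^2)
        + ∫ x in Ω, 2*((v x ⬝ᵥ vcurl v x) * (nk x ⬝ᵥ vcurl nk x)) :=
    integral_add iNw (iS1.const_mul 2)
  have a2 : (∫ x in Ω, ((nk x ⬝ᵥ vcurl v x)^2
        + 2*((v x ⬝ᵥ vcurl v x) * (nk x ⬝ᵥ vcurl nk x))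
        + 2*((nk x ⬝ᵥ vcurl v x) * (v x ⬝ᵥ vcurl nk x))))
      = (∫ x in Ω, ((nk x ⬝ᵥ vcurl v x)^2
        + 2*((v x ⬝ᵥ vcurl v x) * (nk x ⬝ᵥ vcurl nk x))))
        + ∫ x in Ω, 2*((nk x ⬝ᵥ vcurl v x) * (v x ⬝ᵥ vcurl nk x)) :=
    integral_add i1 (iS2.const_mul 2)
  have a3 : (∫ x in Ω, ((nk x ⬝ᵥ vcurl v x)^2
        + 2*((v x ⬝ᵥ vcurl v x) * (nk x ⬝ᵥ vcurl nk x))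
        + 2*((nk x ⬝ᵥ vcurl v x) * (v x ⬝ᵥ vcurl nk x))
        + (v x ⬝ᵥ vcurl nk x) * (v x ⬝ᵥ vcurl nk x)))
      = (∫ x in Ω, ((nk x ⬝ᵥ vcurl v x)^2
        + 2*((v x ⬝ᵥ vcurl v x) * (nk x ⬝ᵥ vcurl nk x))
        + 2*((nk x ⬝ᵥ vcurl v x) * (v x ⬝ᵥ vcurl nk x))))
        + ∫ x in Ω, (v x ⬝ᵥ vcurl nk x) * (v x ⬝ᵥ vcurl nk x) :=
    integral_add i2 iS5
  have c1 : (∫ x in Ω, 2*((v x ⬝ᵥ vcurl v x) * (nk x ⬝ᵥ vcurl nk x)))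
      = 2*(∫ x in Ω, (v x ⬝ᵥ vcurl v x) * (nk x ⬝ᵥ vcurl nk x)) := integral_const_mul 2 _
  have c2 : (∫ x in Ω, 2*((nk x ⬝ᵥ vcurl v x) * (v x ⬝ᵥ vcurl nk x)))
      = 2*(∫ x in Ω, (nk x ⬝ᵥ vcurl v x) * (v x ⬝ᵥ vcurl nk x)) := integral_const_mul 2 _
  have b1 : (∫ x in Ω, (β*(vcurl v x ⬝ᵥ vcurl v x)
        + 2*s*((v x ⬝ᵥ v x) + (vcurl v x ⬝ᵥ vcurl v x))))
      = (∫ x in Ω, β*(vcurl v x ⬝ᵥ vcurl v x))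
        + ∫ x in Ω, 2*s*((v x ⬝ᵥ v x) + (vcurl v x ⬝ᵥ vcurl v x)) :=
    integral_add (iCu.const_mul β) ((iV.add iCu).const_mul (2*s))
  have b2 : (∫ x in Ω, (β*(vcurl v x ⬝ᵥ vcurl v x)
        + 2*s*((v x ⬝ᵥ v x) + (vcurl v x ⬝ᵥ vcurl v x))
        + Csup*(v x ⬝ᵥ v x)))
      = (∫ x in Ω, (β*(vcurl v x ⬝ᵥ vcurl v x)
        + 2*s*((v x ⬝ᵥ v x) + (vcurl v x ⬝ᵥ vcurl v x))))
        + ∫ x in Ω, Csup*(v x ⬝ᵥ v x) :=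
    integral_add j1 (iV.const_mul Csup)
  have c3 : (∫ x in Ω, β*(vcurl v x ⬝ᵥ vcurl v x))
      = β*(∫ x in Ω, vcurl v x ⬝ᵥ vcurl v x) := integral_const_mul β _
  have c4 : (∫ x in Ω, 2*s*((v x ⬝ᵥ v x) + (vcurl v x ⬝ᵥ vcurl v x)))
      = (2*s)*∫ x in Ω, ((v x ⬝ᵥ v x) + (vcurl v x ⬝ᵥ vcurl v x)) := integral_const_mul (2*s) _
  have c5 : (∫ x in Ω, Csup*(v x ⬝ᵥ v x))
      = Csup*(∫ x in Ω, v x ⬝ᵥ v x) := integral_const_mul Csup _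
  have c6 : (∫ x in Ω, ((v x ⬝ᵥ v x) + (vcurl v x ⬝ᵥ vcurl v x)))
      = (∫ x in Ω, v x ⬝ᵥ v x) + ∫ x in Ω, vcurl v x ⬝ᵥ vcurl v x :=
    integral_add iV iCu
  rw [a3, a2, a1, c1, c2, b2, b1, c3, c4, c5, c6] at hmono
  -- rewrite the Z-term
  have eZ : (∫ x in Ω, ((Zmat (K₂ / K₃) (nk x)) *ᵥ vcurl v x) ⬝ᵥ vcurl v x)
      = (∫ x in Ω, vcurl v x ⬝ᵥ vcurl v x) - ε₂ * (∫ x in Ω, (nk x ⬝ᵥ vcurl v x)^2) := by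
    rw [hκ]
    have hpt : ∀ x, (Zmat (1 - ε₂) (nk x) *ᵥ vcurl v x) ⬝ᵥ vcurl v x
        = (vcurl v x ⬝ᵥ vcurl v x) - ε₂ * (nk x ⬝ᵥ vcurl v x)^2 := fun x => by
      rw [zquad]; ring
    rw [integral_congr_ae (Filter.Eventually.of_forall hpt),
      integral_sub iCu (iNw.const_mul ε₂), integral_const_mul]
  have eD : (∫ x in Ω, vdiv v x * vdiv v x) = ∫ x in Ω, (vdiv v x)^2 := by
    congr 1; funext x; rw [pow_two]
  have e3 : (∫ x in Ω, (nk x ⬝ᵥ vcurl nk x) * (v x ⬝ᵥ vcurl v x))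
      = ∫ x in Ω, (v x ⬝ᵥ vcurl v x) * (nk x ⬝ᵥ vcurl nk x) := by
    congr 1; funext x; rw [mul_comm]
  have hKd : K₂ - K₃ = -(ε₂ * K₃) := by rw [hK₂]; ring
  unfold aform DCsq
  rw [eD, eZ, e3, hKd]
  -- final arithmetic
  have hm2 : ε₂*K₃*((∫ x in Ω, (nk x ⬝ᵥ vcurl v x)^2)
        + 2*(∫ x in Ω, (v x ⬝ᵥ vcurl v x) * (nk x ⬝ᵥ vcurl nk x))
        + 2*(∫ x in Ω, (nk x ⬝ᵥ vcurl v x) * (v x ⬝ᵥ vcurl nk x))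
        + (∫ x in Ω, (v x ⬝ᵥ vcurl nk x) * (v x ⬝ᵥ vcurl nk x)))
      ≤ ε₂*K₃*(β*(∫ x in Ω, vcurl v x ⬝ᵥ vcurl v x)
        + 2*s*((∫ x in Ω, v x ⬝ᵥ v x) + (∫ x in Ω, vcurl v x ⬝ᵥ vcurl v x))
        + Csup*(∫ x in Ω, v x ⬝ᵥ v x)) := by
    apply mul_le_mul_of_nonneg_left _ (by positivity : (0:ℝ) ≤ ε₂*K₃)
    linarith [hmono]
  have hα₁nn : (0:ℝ) ≤ K₁/(C+1) := le_of_lt (div_pos hK₁ (by linarith))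
  have h1 : (K₁/(C+1)) * ((∫ x in Ω, v x ⬝ᵥ v x) + (∫ x in Ω, (vdiv v x)^2)
        + (∫ x in Ω, vcurl v x ⬝ᵥ vcurl v x))
      ≤ K₁*((∫ x in Ω, (vdiv v x)^2) + (∫ x in Ω, vcurl v x ⬝ᵥ vcurl v x)) := by
    have h2 : (K₁/(C+1))*(C+1)*((∫ x in Ω, (vdiv v x)^2)
        + (∫ x in Ω, vcurl v x ⬝ᵥ vcurl v x))
        = K₁*((∫ x in Ω, (vdiv v x)^2) + (∫ x in Ω, vcurl v x ⬝ᵥ vcurl v x)) := by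
      rw [div_mul_cancel₀ _ (by linarith : C + 1 ≠ 0)]
    linarith [mul_le_mul_of_nonneg_left hP hα₁nn, h2]
  have h4 : ε₂*(β*K₃)*(∫ x in Ω, vcurl v x ⬝ᵥ vcurl v x)
      ≤ (K₃-K₁)*(∫ x in Ω, vcurl v x ⬝ᵥ vcurl v x) :=
    mul_le_mul_of_nonneg_right hεb' hCunn
  have h3 : ε₂*K₃*(2*s*((∫ x in Ω, v x ⬝ᵥ v x) + (∫ x in Ω, vcurl v x ⬝ᵥ vcurl v x))
        + Csup*(∫ x in Ω, v x ⬝ᵥ v x))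
      ≤ ε₂*(K₃*(4*s+Csup))*((∫ x in Ω, v x ⬝ᵥ v x) + (∫ x in Ω, (vdiv v x)^2)
        + (∫ x in Ω, vcurl v x ⬝ᵥ vcurl v x)) := by
    linarith [mul_nonneg (mul_nonneg (mul_nonneg hε₂.le hK₃.le) hs0) hVnn,
      mul_nonneg (mul_nonneg (mul_nonneg hε₂.le hK₃.le) hs0) hDnn,
      mul_nonneg (mul_nonneg (mul_nonneg hε₂.le hK₃.le) hs0) hCunn,
      mul_nonneg (mul_nonneg (mul_nonneg hε₂.le hK₃.le) hCsup.le) hDnn,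
      mul_nonneg (mul_nonneg (mul_nonneg hε₂.le hK₃.le) hCsup.le) hCunn]
  linarith [hm2, h1, h3, h4, hL]
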